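/- arXiv:physics/0612017 — 5 statements merged into one kernel-verified Lean document; each statement's English description precedes it below -/
import Mathlib

section
/- For any N×N real matrix A with entries a_{ij} ∈ [0,1] for i ≠ j and a_{ii} = 1 for all i, the asymmetry index satisfies S̃(A) ≤ (N−1)/(N+1). -/
lemma pair_ineq_aux {n a b : ℝ} (hn : 1 ≤ n) (ha0 : 0 ≤ a) (ha1 : a ≤ 1)
    (hb0 : 0 ≤ b) (hb1 : b ≤ 1) :
    (n+1)*(a-b)^2 ≤ (n-1)*(a^2+b^2) + 2 := by
  nlinarith [mul_nonneg ha0 hb0, mul_nonneg (sub_nonneg.2 ha1) (sub_nonneg.2 hb1),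
    mul_nonneg ha0 (sub_nonneg.2 ha1), mul_nonneg hb0 (sub_nonneg.2 hb1),
    mul_nonneg (by linarith : (0:ℝ) ≤ n - 1) (mul_nonneg ha0 hb0)]

theorem asymmetry_index_upper_bound (N : ℕ) (hN : 1 ≤ N)
    (A : Matrix (Fin N) (Fin N) ℝ)
    (hoff : ∀ i j, i ≠ j → A i j ∈ Set.Icc (0:ℝ) 1) (hdiag : ∀ i, A i i = 1) :
    (∑ i, ∑ j, (A i j - A j i)^2) / (2 * ∑ i, ∑ j, (A i j)^2) ≤ ((N:ℝ) - 1) / ((N:ℝ) + 1) := by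
  have hn1 : (1:ℝ) ≤ (N:ℝ) := by exact_mod_cast hN
  have i0 : Fin N := ⟨0, hN⟩
  -- denominator positivity
  have hinner : ∀ i : Fin N, (1:ℝ) ≤ ∑ j, (A i j)^2 := by
    intro i
    have := Finset.single_le_sum (f := fun j => (A i j)^2)
      (fun j _ => sq_nonneg _) (Finset.mem_univ i)
    simpa [hdiag i] using this
  have hden : (0:ℝ) < ∑ i, ∑ j, (A i j)^2 := by
    have := Finset.single_le_sum (f := fun i => ∑ j, (A i j)^2)
      (fun i _ => Finset.sum_nonneg fun j _ => sq_nonneg _) (Finset.mem_univ i0)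
    linarith [hinner i0]
  -- row-wise inequality
  have hrow : ∀ i : Fin N,
      ∑ j, ((N:ℝ)+1)*(A i j - A j i)^2 ≤ ∑ j, ((N:ℝ)-1)*((A i j)^2 + (A j i)^2) := by
    intro i
    rw [← Finset.add_sum_erase _ (fun j => ((N:ℝ)+1)*(A i j - A j i)^2) (Finset.mem_univ i),
        ← Finset.add_sum_erase _ (fun j => ((N:ℝ)-1)*((A i j)^2 + (A j i)^2)) (Finset.mem_univ i)]
    have hcard : ((Finset.univ.erase i).card : ℝ) = (N:ℝ) - 1 := by
      rw [Finset.card_erase_of_mem (Finset.mem_univ i)]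
      have : 1 ≤ (Finset.univ : Finset (Fin N)).card := by simpa using hN
      push_cast [Nat.cast_sub this]
      simp
    have hsum : ∑ j ∈ Finset.univ.erase i, ((N:ℝ)+1)*(A i j - A j i)^2 ≤
        ∑ j ∈ Finset.univ.erase i, (((N:ℝ)-1)*((A i j)^2 + (A j i)^2) + 2) := by
      apply Finset.sum_le_sum
      intro j hj
      have hji : j ≠ i := Finset.ne_of_mem_erase hj
      obtain ⟨ha0, ha1⟩ := hoff i j (Ne.symm hji)
      obtain ⟨hb0, hb1⟩ := hoff j i hji
      exact pair_ineq_aux hn1 ha0 ha1 hb0 hb1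
    rw [Finset.sum_add_distrib, Finset.sum_const, nsmul_eq_mul, hcard] at hsum
    have hd : A i i = 1 := hdiag i
    simp only [hd]
    nlinarith [hsum]
  have key : ((N:ℝ)+1) * (∑ i, ∑ j, (A i j - A j i)^2) ≤
      ((N:ℝ)-1) * (2 * ∑ i, ∑ j, (A i j)^2) := by
    have h1 : ∑ i, ∑ j, ((N:ℝ)+1)*(A i j - A j i)^2 ≤
        ∑ i, ∑ j, ((N:ℝ)-1)*((A i j)^2 + (A j i)^2) :=
      Finset.sum_le_sum fun i _ => hrow i
    have e1 : ∑ i, ∑ j, ((N:ℝ)+1)*(A i j - A j i)^2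
        = ((N:ℝ)+1) * ∑ i, ∑ j, (A i j - A j i)^2 := by
      simp [Finset.mul_sum]
    have e2 : ∑ i, ∑ j, ((N:ℝ)-1)*((A i j)^2 + (A j i)^2)
        = ((N:ℝ)-1) * (2 * ∑ i, ∑ j, (A i j)^2) := by
      have hswap : (∑ i, ∑ j, ((N:ℝ)-1) * (A j i)^2)
          = ∑ i, ∑ j, ((N:ℝ)-1) * (A i j)^2 := Finset.sum_comm
      calc ∑ i, ∑ j, ((N:ℝ)-1)*((A i j)^2 + (A j i)^2)
          = (∑ i, ∑ j, ((N:ℝ)-1)*(A i j)^2) + ∑ i, ∑ j, ((N:ℝ)-1)*(A j i)^2 := by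
            simp [mul_add, Finset.sum_add_distrib]
        _ = 2 * ∑ i, ∑ j, ((N:ℝ)-1)*(A i j)^2 := by rw [hswap]; ring
        _ = ((N:ℝ)-1) * (2 * ∑ i, ∑ j, (A i j)^2) := by
            simp only [← Finset.mul_sum]; ring
    rw [e1, e2] at h1
    exact h1
  rw [div_le_div_iff₀ (by linarith) (by linarith)]
  nlinarith [key]
end

section
/- The upper bound (N−1)/(N+1) of the asymmetry index is attained: the N×N matrix A with a_{ij} = 1 for j ≥ i and a_{ij} = 0 for j < i (upper triangular matrix of ones with unit diagonal) satisfies S̃(A) = (N−1)/(N+1). -/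
/-!
For a linear order the indicators of `i ≤ j` and `j ≤ i` add up to `1 + δᵢⱼ` and their
difference squared is `1 - δᵢⱼ`. Summing over all pairs gives `2 ∑ aᵢⱼ² = N (N + 1)` for the
denominator and `N (N - 1)` for the numerator, and the factor `N` cancels.
-/

open Finset

section LinearOrder

variable {R ι : Type*} [CommRing R] [LinearOrder ι]

lemma ite_le_add_ite_ge (i j : ι) :
    ((if i ≤ j then 1 else 0) + (if j ≤ i then 1 else 0) : R) = 1 + if i = j then 1 else 0 := by
  rcases lt_trichotomy i j with h | rfl | h
  · simp [h.le, h.not_ge, h.ne]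
  · simp
  · simp [h.le, h.not_ge, h.ne']

lemma sq_ite_le_sub_ite_ge (i j : ι) :
    ((if i ≤ j then 1 else 0) - (if j ≤ i then 1 else 0) : R) ^ 2 = 1 - if i = j then 1 else 0 := by
  rcases lt_trichotomy i j with h | rfl | h
  · simp [h.le, h.not_ge, h.ne]
  · simp
  · simp [h.le, h.not_ge, h.ne']

variable [Fintype ι]

lemma two_mul_sum_sum_ite_le :
    2 * ∑ i : ι, ∑ j : ι, (if i ≤ j then 1 else 0 : R)
      = Fintype.card ι * (Fintype.card ι + 1) := by
  calc 2 * ∑ i : ι, ∑ j : ι, (if i ≤ j then 1 else 0 : R)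
      = ∑ i : ι, ∑ j : ι, ((if i ≤ j then 1 else 0) + (if j ≤ i then 1 else 0) : R) := by
        simp only [sum_add_distrib, two_mul]
        rw [sum_comm (f := fun i j => (if j ≤ i then 1 else 0 : R))]
    _ = ∑ i : ι, ∑ j : ι, (1 + if i = j then 1 else 0 : R) := by
        simp only [ite_le_add_ite_ge]
    _ = Fintype.card ι * (Fintype.card ι + 1) := by
        simp [sum_add_distrib, mul_add, add_comm]

lemma sum_sum_sq_ite_le_sub_ite_ge :
    ∑ i : ι, ∑ j : ι, ((if i ≤ j then 1 else 0) - (if j ≤ i then 1 else 0) : R) ^ 2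
      = Fintype.card ι * (Fintype.card ι - 1) := by
  simp [sq_ite_le_sub_ite_ge, sum_sub_distrib, mul_sub]

end LinearOrder

theorem asymmetry_index_upper_bound_attained (N : ℕ) (hN : 1 ≤ N)
    (A : Matrix (Fin N) (Fin N) ℝ)
    (hA : ∀ i j : Fin N, A i j = if i ≤ j then 1 else 0) :
    (∑ i, ∑ j, (A i j - A j i)^2) / (2 * ∑ i, ∑ j, (A i j)^2) = ((N:ℝ) - 1) / ((N:ℝ) + 1) := by
  have hA_sq : ∀ i j, A i j ^ 2 = A i j := fun i j => by rw [hA]; split_ifs <;> norm_num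
  have hN₀ : (N : ℝ) ≠ 0 := Nat.cast_ne_zero.mpr (by omega)
  simp only [hA_sq]
  simp only [hA]
  rw [two_mul_sum_sum_ite_le, sum_sum_sq_ite_le_sub_ite_ge, Fintype.card_fin,
    mul_div_mul_left _ _ hN₀]
end

section
/- For a binary matrix A (entries in {0,1}, unit diagonal) with N ≥ 2 and no reciprocated links (a_{ij}a_{ji} = 0 for all i ≠ j), the asymmetry index satisfies S̃(A) = d(A)/((N−1)^{-1} + d(A)), and over all such matrices this is maximized exactly when d(A) = 1/2, at which point S̃(A) = (N−1)/(N+1). -/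
theorem binary_no_reciprocation_index (N : ℕ) (hN : 2 ≤ N)
    (A : Matrix (Fin N) (Fin N) ℝ)
    (hbin : ∀ i j, i ≠ j → A i j = 0 ∨ A i j = 1) (hdiag : ∀ i, A i i = 1)
    (hnorec : ∀ i j, i ≠ j → A i j * A j i = 0)
    (d : ℝ)
    (hd : d = (∑ i, ∑ j ∈ Finset.univ.filter (fun j => j ≠ i), A i j) / ((N:ℝ) * ((N:ℝ) - 1))) :
    (∑ i, ∑ j, (A i j - A j i)^2) / (2 * ∑ i, ∑ j, (A i j)^2) = d / (((N:ℝ) - 1)⁻¹ + d) ∧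
    (∑ i, ∑ j, (A i j - A j i)^2) / (2 * ∑ i, ∑ j, (A i j)^2) ≤ ((N:ℝ) - 1) / ((N:ℝ) + 1) ∧
    ((∑ i, ∑ j, (A i j - A j i)^2) / (2 * ∑ i, ∑ j, (A i j)^2) = ((N:ℝ) - 1) / ((N:ℝ) + 1)
      ↔ d = 1 / 2) := by
  set n : ℝ := (N : ℝ) with hn
  have hn2 : (2:ℝ) ≤ n := by rw [hn]; exact_mod_cast hN
  have hnpos : 0 < n := by linarith
  have hn1 : 0 < n - 1 := by linarith
  have hsq : ∀ i j, (A i j)^2 = A i j := by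
    intro i j
    by_cases h : i = j
    · subst h; rw [hdiag]; ring
    · rcases hbin i j h with h' | h' <;> rw [h'] <;> ring
  have hnonneg : ∀ i j, 0 ≤ A i j := by
    intro i j
    by_cases h : i = j
    · subst h; rw [hdiag]; norm_num
    · rcases hbin i j h with h' | h' <;> rw [h'] <;> norm_num
  set T : ℝ := ∑ i, ∑ j, A i j with hT
  set M : ℝ := ∑ i, ∑ j ∈ Finset.univ.filter (fun j => j ≠ i), A i j with hM
  have rows : ∀ i ∈ (Finset.univ : Finset (Fin N)),
      (∑ j, A i j) = (∑ j ∈ Finset.univ.filter (fun j => j ≠ i), A i j) + 1 := by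
    intro i _
    rw [← Finset.sum_filter_add_sum_filter_not Finset.univ (fun j => j ≠ i)]
    congr 1
    have he : Finset.univ.filter (fun j => ¬ j ≠ i) = {i} := by ext x; simp
    rw [he, Finset.sum_singleton, hdiag]
  have hTM : T = M + n := by
    calc T = ∑ i, ((∑ j ∈ Finset.univ.filter (fun j => j ≠ i), A i j) + 1) :=
          Finset.sum_congr rfl rows
      _ = M + n := by rw [Finset.sum_add_distrib, ← hM]; simp [hn]
  have hden : ∑ i, ∑ j, (A i j)^2 = T := by
    rw [hT]; exact Finset.sum_congr rfl fun i _ => Finset.sum_congr rfl fun j _ => hsq i j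
  have hswap : ∑ i, ∑ j, A j i = T := by rw [hT]; exact Finset.sum_comm
  have hprod : ∑ i, ∑ j, A i j * A j i = n := by
    have hrow : ∀ i ∈ (Finset.univ : Finset (Fin N)), ∑ j, A i j * A j i = 1 := by
      intro i _
      rw [Finset.sum_eq_single i]
      · rw [hdiag]; ring
      · intro j _ hji
        exact hnorec i j (fun h => hji h.symm)
      · simp
    rw [Finset.sum_congr rfl hrow]
    simp [hn]
  have hnum : ∑ i, ∑ j, (A i j - A j i)^2 = 2 * T - 2 * n := by
    have expand : ∀ i j, (A i j - A j i)^2 = A i j + A j i - 2 * (A i j * A j i) := by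
      intro i j
      have h1 := hsq i j
      have h2 := hsq j i
      nlinarith [h1, h2]
    calc ∑ i, ∑ j, (A i j - A j i)^2
        = ∑ i, ∑ j, (A i j + A j i - 2 * (A i j * A j i)) :=
          Finset.sum_congr rfl fun i _ => Finset.sum_congr rfl fun j _ => expand i j
      _ = (∑ i, ∑ j, A i j) + (∑ i, ∑ j, A j i) - 2 * ∑ i, ∑ j, A i j * A j i := by
          simp only [Finset.sum_sub_distrib, Finset.sum_add_distrib, Finset.mul_sum]
      _ = 2 * T - 2 * n := by rw [hswap, hprod, ← hT]; ring
  have hM0 : 0 ≤ M := by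
    rw [hM]
    apply Finset.sum_nonneg; intro i _
    exact Finset.sum_nonneg fun j _ => hnonneg i j
  have hbound : 2 * M ≤ n * (n - 1) := by
    have step : ∑ i, ∑ j, (A i j + A j i) ≤
        ∑ i : Fin N, ∑ j : Fin N, (if i = j then (2:ℝ) else 1) := by
      apply Finset.sum_le_sum; intro i _
      apply Finset.sum_le_sum; intro j _
      by_cases h : i = j
      · subst h; rw [if_pos rfl, hdiag]; norm_num
      · rw [if_neg h]
        have hz := hnorec i j h
        rcases hbin i j h with h1 | h1 <;> rcases hbin j i (fun hh => h hh.symm) with h2 | h2 <;>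
          rw [h1, h2] at hz ⊢ <;> linarith
    have lhs_eq : ∑ i, ∑ j, (A i j + A j i) = T + T := by
      simp only [Finset.sum_add_distrib]
      rw [hswap, ← hT]
    have rhs_eq : ∑ i : Fin N, ∑ j : Fin N, (if i = j then (2:ℝ) else 1) = n * (n + 1) := by
      have inner : ∀ i ∈ (Finset.univ : Finset (Fin N)),
          ∑ j : Fin N, (if i = j then (2:ℝ) else 1) = n + 1 := by
        intro i _
        have hsplit : ∀ j : Fin N, (if i = j then (2:ℝ) else 1) = 1 + (if i = j then (1:ℝ) else 0) := by
          intro j; split <;> norm_num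
        rw [Finset.sum_congr rfl (fun j _ => hsplit j), Finset.sum_add_distrib]
        simp [hn, add_comm]
      rw [Finset.sum_congr rfl inner]
      simp [hn]; ring
    rw [lhs_eq, rhs_eq] at step
    nlinarith [hTM]
  have hd' : d = M / (n * (n - 1)) := hd
  have hT' : T = n + M := by linarith
  clear_value n T M
  have hnM : 0 < n + M := by linarith
  have hLHS : (∑ i, ∑ j, (A i j - A j i)^2) / (2 * ∑ i, ∑ j, (A i j)^2) = M / (n + M) := by
    rw [hnum, hden, hT']
    rw [div_eq_div_iff (by positivity) (by positivity)]
    ring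
  rw [hLHS]
  have hdpos : 0 < (n - 1)⁻¹ + M / (n * (n - 1)) := by positivity
  refine ⟨?_, ?_, ?_⟩
  · rw [hd', div_eq_div_iff hnM.ne' hdpos.ne']
    field_simp
    try ring
  · rw [div_le_div_iff₀ hnM (by linarith)]
    nlinarith
  · constructor
    · intro h
      rw [div_eq_div_iff hnM.ne' (by positivity)] at h
      rw [hd', div_eq_div_iff (by positivity) (by norm_num)]
      nlinarith
    · intro h
      rw [hd', div_eq_div_iff (by positivity) (by norm_num)] at h
      rw [div_eq_div_iff hnM.ne' (by positivity)]
      nlinarith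
end

section
/- For any N ≥ 2 and any N×N real matrix A with a_{ij} ∈ [0,1] for i ≠ j and a_{ii} = 1 for all i, the rescaled index S(A) = ((N+1)/(N−1)) · S̃(A) lies in the unit interval [0,1]. -/
theorem rescaled_index_in_unit_interval (N : ℕ) (hN : 2 ≤ N)
    (A : Matrix (Fin N) (Fin N) ℝ)
    (hoff : ∀ i j, i ≠ j → A i j ∈ Set.Icc (0:ℝ) 1) (hdiag : ∀ i, A i i = 1) :
    ((N:ℝ) + 1) / ((N:ℝ) - 1)
        * ((∑ i, ∑ j, (A i j - A j i)^2) / (2 * ∑ i, ∑ j, (A i j)^2)) ∈ Set.Icc (0:ℝ) 1 := by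
  set n : ℝ := (N : ℝ) with hn
  have hn2 : (2:ℝ) ≤ n := by rw [hn]; exact_mod_cast hN
  set Num : ℝ := ∑ i, ∑ j, (A i j - A j i)^2 with hNum
  set D : ℝ := ∑ i, ∑ j, (A i j)^2 with hD
  have hNum0 : 0 ≤ Num := by
    apply Finset.sum_nonneg; intro i _; apply Finset.sum_nonneg; intro j _; positivity
  have hDge : n ≤ D := by
    have h1 : ∀ i : Fin N, (1:ℝ) ≤ ∑ j, (A i j)^2 := by
      intro i
      have := Finset.single_le_sum (f := fun j => (A i j)^2)
        (fun j _ => by positivity) (Finset.mem_univ i)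
      simpa [hdiag i] using this
    calc n = ∑ _i : Fin N, (1:ℝ) := by simp [hn]
      _ ≤ D := Finset.sum_le_sum fun i _ => h1 i
  have hDpos : 0 < D := lt_of_lt_of_le (by linarith) hDge
  have key : ∀ i j, (n+1)*(A i j - A j i)^2 ≤
      (n-1)*((A i j)^2+(A j i)^2) + (if i = j then -(2*(n-1)) else 2) := by
    intro i j
    by_cases hij : i = j
    · subst hij
      simp [hdiag i]
      nlinarith
    · simp only [hij, if_false]
      obtain ⟨ha0, ha1⟩ := hoff i j hij
      obtain ⟨hb0, hb1⟩ := hoff j i (Ne.symm hij)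
      nlinarith [mul_nonneg ha0 hb0, mul_nonneg (sub_nonneg.2 ha1) (sub_nonneg.2 hb1),
        mul_nonneg (mul_nonneg ha0 hb0) (by linarith : (0:ℝ) ≤ n - 2),
        mul_nonneg ha0 (sub_nonneg.2 ha1), mul_nonneg hb0 (sub_nonneg.2 hb1)]
  have hswap : ∑ i, ∑ j, (A j i)^2 = D := by
    rw [hD]; exact Finset.sum_comm
  have hE : ∑ i : Fin N, ∑ j : Fin N, (if i = j then -(2*(n-1)) else (2:ℝ)) = 0 := by
    have hrow : ∀ i : Fin N, ∑ j : Fin N, (if i = j then -(2*(n-1)) else (2:ℝ))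
        = 2*n - 2*(n-1) - 2 := by
      intro i
      have : ∀ j : Fin N, (if i = j then -(2*(n-1)) else (2:ℝ))
          = 2 + (if i = j then (-(2*(n-1)) - 2) else 0) := by
        intro j; by_cases h : i = j <;> simp [h]
      rw [Finset.sum_congr rfl fun j _ => this j, Finset.sum_add_distrib,
        Finset.sum_ite_eq]
      simp [hn]; ring
    have hz : (2*n - 2*(n-1) - 2 : ℝ) = 0 := by ring
    rw [Finset.sum_congr rfl fun i _ => hrow i, hz, Finset.sum_const, smul_zero]
  have hmain : (n+1)*Num ≤ (n-1)*(2*D) := by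
    have h1 : (n+1)*Num ≤ ∑ i, ∑ j, ((n-1)*((A i j)^2+(A j i)^2)
        + (if i = j then -(2*(n-1)) else 2)) := by
      rw [hNum, Finset.mul_sum]
      apply Finset.sum_le_sum; intro i _
      rw [Finset.mul_sum]
      exact Finset.sum_le_sum fun j _ => key i j
    have h2 : ∑ i, ∑ j, ((n-1)*((A i j)^2+(A j i)^2)
        + (if i = j then -(2*(n-1)) else (2:ℝ))) = (n-1)*(2*D) := by
      have : ∀ i : Fin N, ∑ j, ((n-1)*((A i j)^2+(A j i)^2)
          + (if i = j then -(2*(n-1)) else (2:ℝ)))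
          = ((n-1)*∑ j, (A i j)^2) + ((n-1)*∑ j, (A j i)^2)
            + ∑ j, (if i = j then -(2*(n-1)) else (2:ℝ)) := by
        intro i
        rw [Finset.sum_add_distrib, ← Finset.mul_sum, Finset.sum_add_distrib, mul_add]
      rw [Finset.sum_congr rfl fun i _ => this i]
      rw [Finset.sum_add_distrib, Finset.sum_add_distrib, hE,
        ← Finset.mul_sum, ← Finset.mul_sum, hswap, ← hD]
      ring
    linarith [h1, h2.le, h2.ge]
  constructor
  · apply mul_nonneg
    · apply div_nonneg <;> linarith
    · apply div_nonneg hNum0; linarith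
  · rw [div_mul_div_comm, div_le_one (by nlinarith)]
    nlinarith
end

section
/- For a binary matrix A (off-diagonal entries in {0,1}, unit diagonal) with N ≥ 2 and no reciprocated links, the asymmetry index S̃(A) is bounded above by (N−1)/(N+1), with equality if and only if exactly N(N−1)/2 of the off-diagonal entries equal 1 (equivalently, a_{ij} + a_{ji} = 1 for all i ≠ j). -/
theorem binary_no_reciprocation_max (N : ℕ) (hN : 2 ≤ N)
    (A : Matrix (Fin N) (Fin N) ℝ)
    (hbin : ∀ i j, i ≠ j → A i j = 0 ∨ A i j = 1) (hdiag : ∀ i, A i i = 1)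
    (hnorec : ∀ i j, i ≠ j → A i j * A j i = 0) :
    (∑ i, ∑ j, (A i j - A j i)^2) / (2 * ∑ i, ∑ j, (A i j)^2) ≤ ((N:ℝ) - 1) / ((N:ℝ) + 1) ∧
    ((∑ i, ∑ j, (A i j - A j i)^2) / (2 * ∑ i, ∑ j, (A i j)^2) = ((N:ℝ) - 1) / ((N:ℝ) + 1)
      ↔ ∀ i j, i ≠ j → A i j + A j i = 1) := by
  have hNr : (2:ℝ) ≤ (N:ℝ) := by exact_mod_cast hN
  set S : ℝ := ∑ i, ∑ j, (A i j)^2 with hSdef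
  have hsq : ∀ i j, (A i j)^2 = A i j := by
    intro i j
    by_cases h : i = j
    · subst h; rw [hdiag]; norm_num
    · rcases hbin i j h with h' | h' <;> rw [h'] <;> norm_num
  have hprod : ∀ i j, A i j * A j i = if i = j then 1 else 0 := by
    intro i j
    by_cases h : i = j
    · subst h; rw [hdiag]; norm_num
    · simp [h, hnorec i j h]
  have hswap : ∑ i, ∑ j, (A j i)^2 = S := by
    rw [hSdef]; exact Finset.sum_comm 
  have hdiagsum : ∑ i : Fin N, ∑ j, (A i j * A j i) = N := by
    simp [hprod]
  have hnum : (∑ i, ∑ j, (A i j - A j i)^2) = 2*S - 2*(N:ℝ) := by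
    have h1 : ∀ i : Fin N, ∑ j, (A i j - A j i)^2
        = (∑ j, (A i j)^2) + (∑ j, (A j i)^2) - 2 * ∑ j, (A i j * A j i) := by
      intro i
      rw [Finset.mul_sum, ← Finset.sum_add_distrib, ← Finset.sum_sub_distrib]
      exact Finset.sum_congr rfl fun j _ => by ring
    rw [Finset.sum_congr rfl fun i _ => h1 i, Finset.sum_sub_distrib,
      Finset.sum_add_distrib, hswap, ← Finset.mul_sum, hdiagsum, ← hSdef]
    ring
  -- 2S as sum of pair sums
  have h2S : 2*S = ∑ p : Fin N × Fin N, (A p.1 p.2 + A p.2 p.1) := by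
    rw [Fintype.sum_prod_type]
    have : ∀ i : Fin N, ∑ j, (A i j + A j i) = (∑ j, (A i j)^2) + (∑ j, (A j i)^2) := by
      intro i
      rw [← Finset.sum_add_distrib]
      exact Finset.sum_congr rfl fun j _ => by rw [hsq, hsq]
    rw [Finset.sum_congr rfl fun i _ => this i, Finset.sum_add_distrib, hswap, ← hSdef]
    ring
  have hle : ∀ p : Fin N × Fin N, A p.1 p.2 + A p.2 p.1 ≤ (if p.1 = p.2 then (2:ℝ) else 1) := by
    rintro ⟨i, j⟩
    by_cases h : i = j
    · subst h; simp [hdiag]; norm_num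
    · simp only [h, if_neg]
      rcases hbin i j h with h1 | h1
      · rcases hbin j i (Ne.symm h) with h2 | h2 <;> rw [h1, h2] <;> norm_num
      · have h2 : A j i = 0 := by
          have := hnorec i j h
          rw [h1] at this; linarith
        rw [h1, h2]; norm_num
  have hgsum : ∑ p : Fin N × Fin N, (if p.1 = p.2 then (2:ℝ) else 1) = (N:ℝ)*((N:ℝ)+1) := by
    rw [Fintype.sum_prod_type]
    have : ∀ i : Fin N, ∑ j, (if i = j then (2:ℝ) else 1) = (N:ℝ) + 1 := by
      intro i
      have : ∀ j : Fin N, (if i = j then (2:ℝ) else 1) = 1 + (if i = j then (1:ℝ) else 0) := by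
        intro j; by_cases h : i = j <;> simp [h] <;> norm_num
      rw [Finset.sum_congr rfl fun j _ => this j, Finset.sum_add_distrib]
      simp
    rw [Finset.sum_congr rfl fun i _ => this i]
    simp [mul_add]
  have h2Sle : 2*S ≤ (N:ℝ)*((N:ℝ)+1) := by
    rw [h2S, ← hgsum]
    exact Finset.sum_le_sum fun p _ => hle p
  have hSge : (N:ℝ) ≤ S := by
    have h0 : 0 ≤ ∑ i, ∑ j, (A i j - A j i)^2 :=
      Finset.sum_nonneg fun i _ => Finset.sum_nonneg fun j _ => sq_nonneg _
    linarith [hnum ▸ h0]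
  have hSpos : 0 < 2*S := by linarith
  have hN1 : (0:ℝ) < (N:ℝ) + 1 := by linarith
  constructor
  · rw [hnum, div_le_div_iff₀ hSpos hN1]
    nlinarith
  · constructor
    · intro heq
      rw [hnum, div_eq_div_iff (ne_of_gt hSpos) (ne_of_gt hN1)] at heq
      have h2Seq : 2*S = (N:ℝ)*((N:ℝ)+1) := by nlinarith
      have hpt : ∀ p : Fin N × Fin N,
          A p.1 p.2 + A p.2 p.1 = (if p.1 = p.2 then (2:ℝ) else 1) := by
        have hsum_eq : ∑ p : Fin N × Fin N, (A p.1 p.2 + A p.2 p.1)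
            = ∑ p : Fin N × Fin N, (if p.1 = p.2 then (2:ℝ) else 1) := by
          rw [← h2S, hgsum, h2Seq]
        have h' := (Finset.sum_eq_sum_iff_of_le (fun p _ => hle p)).mp hsum_eq
        exact fun p => h' p (Finset.mem_univ p)
      intro i j hij
      have := hpt (i, j)
      simpa [hij] using this
    · intro hcond
      have h2Seq : 2*S = (N:ℝ)*((N:ℝ)+1) := by
        rw [h2S, ← hgsum]
        refine Finset.sum_congr rfl fun p _ => ?_
        by_cases h : p.1 = p.2
        · simp [h, hdiag]; norm_num
        · simp [h, hcond p.1 p.2 h]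
      rw [hnum]
      rw [div_eq_div_iff (ne_of_gt hSpos) (ne_of_gt hN1)]
      nlinarith
end
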